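/- arXiv:0902.0067 — 2 statements merged into one kernel-verified Lean document; each statement's English description precedes it below -/
import Mathlib

section
/- In the cyclic-chain setup, assume 0 < p_k < 1 for every k and that p₁⋯pₙ ≠ q₁⋯qₙ. Let π = (π₁,…,πₙ) be the unique stationary distribution of the cyclic chain, set M_k = ξ_{k−1} ξ_k/(p_k ξ_{k−1} + q_k ξ_k) and r_k = p_k/q_k, and let t₁,…,tₙ be arbitrary real numbers. Then Σ_{k=1}^{n} (p_k − q_k) π_k M_k t_k > 0 if and only if Σ_{k=1}^{n} ξ_k Σ_{j=1}^{n} r_{k+1} r_{k+2} ⋯ r_{k+j−1} (r_{k+j} − 1) t_{k+j} > 0 (indices mod n; the inner product over an empty range is 1). -/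
/-!
The edge flux `c = π_k p̃_k − π_{k+1} q̃_{k+1}` of a stationary distribution is the same on every
edge of the cycle. Multiplying it by `ξ_k` shows that the masses `u_k = q_k π_k M_k` obey the
affine recurrence `u_{k+1} = r_k u_k − c ξ_k`; running it once around the cycle gives
`(R − 1) u_{k+1} = c S_k` with `R = r₁⋯rₙ ≠ 1` and `S_k = Σ_j r_k r_{k−1}⋯r_{k−j+1} ξ_{k−j} > 0`.
Since some `u_k` is positive, `u_{k+1} = λ S_k` for a constant `λ > 0`. As
`(p_k − q_k) π_k M_k = (r_k − 1) u_k`, the first sum is `λ` times the second after reindexing.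
-/

open Finset

namespace ZMod

variable {n : ℕ} [NeZero n]

@[to_additive]
theorem prod_range_natCast {M : Type*} [CommMonoid M] (f : ZMod n → M) :
    ∏ k ∈ range n, f k = ∏ x, f x :=
  prod_nbij' (fun k => (k : ZMod n)) ZMod.val (fun _ _ => mem_univ _)
    (fun a _ => mem_range.2 (ZMod.val_lt a))
    (fun _ ha => ZMod.val_cast_of_lt (mem_range.1 ha)) (fun a _ => ZMod.natCast_zmod_val a)
    (fun _ _ => rfl)

theorem prod_range_sub_natCast {M : Type*} [CommMonoid M] (f : ZMod n → M) (k : ZMod n) :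
    ∏ i ∈ range n, f (k - i) = ∏ x, f x := by
  rw [prod_range_natCast fun x => f (k - x)]
  exact (Equiv.subLeft k).prod_comp f

theorem prod_div_ne_one {K : Type*} [Field K] {p q : ZMod n → K} (hq : ∀ k, q k ≠ 0)
    (h : ∏ k ∈ range n, p k ≠ ∏ k ∈ range n, q k) : ∏ x, p x / q x ≠ 1 := by
  rw [prod_div_distrib, ne_eq, div_eq_one_iff_eq (prod_ne_zero_iff.2 fun k _ => hq k),
    ← prod_range_natCast p, ← prod_range_natCast q]
  exact h

theorem eq_of_forall_add_one_eq {α : Type*} {g : ZMod n → α} (h : ∀ k, g (k + 1) = g k)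
    (k j : ZMod n) : g k = g j := by
  have h0 : ∀ m : ℕ, g m = g 0 := fun m => by
    induction m with
    | zero => simp
    | succ m ih => rw [Nat.cast_succ, h, ih]
  obtain ⟨a, rfl⟩ := natCast_zmod_surjective k
  obtain ⟨b, rfl⟩ := natCast_zmod_surjective j
  rw [h0, h0]

end ZMod

section AffineRecurrence

variable {G R : Type*} [AddCommGroupWithOne G] [CommRing R]

theorem prod_range_add_one_add_natCast {M : Type*} [CommMonoid M] (f : G → M) (a : G) (j : ℕ) :
    ∏ i ∈ range j, f (a + 1 + i) = ∏ i ∈ range j, f (a + j - i) := by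
  induction j with
  | zero => simp
  | succ j ih =>
    rw [prod_range_succ, prod_range_succ', ih]
    congr 1
    · exact prod_congr rfl fun i _ => congrArg f (by push_cast; abel)
    · exact congrArg f (by push_cast; abel)

theorem affine_recurrence_iterate {u r g : G → R} (h : ∀ k, u (k + 1) = r k * u k + g k)
    (m : ℕ) (k : G) :
    u (k + 1) = (∏ i ∈ range m, r (k - i)) * u (k + 1 - m) +
      ∑ j ∈ range m, (∏ i ∈ range j, r (k - i)) * g (k - j) := by
  induction m with
  | zero => simp
  | succ m ih =>
    have hstep : u (k + 1 - m) = r (k - m) * u (k + 1 - (m + 1 : ℕ)) + g (k - m) := by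
      rw [show k + 1 - m = k - m + 1 by abel, h, Nat.cast_succ, add_sub_add_right_eq_sub]
    rw [ih, hstep, prod_range_succ, sum_range_succ]
    ring

end AffineRecurrence

section CycleSum

variable {n : ℕ} {R : Type*} [CommRing R]

def cycleSum (r g : ZMod n → R) (k : ZMod n) : R :=
  ∑ j ∈ range n, (∏ i ∈ range j, r (k - i)) * g (k - j)

theorem cycleSum_const_mul (r g : ZMod n → R) (c : R) (k : ZMod n) :
    cycleSum r (fun k => c * g k) k = c * cycleSum r g k := by
  simp only [cycleSum, mul_sum]
  exact sum_congr rfl fun _ _ => by ring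

theorem one_sub_prod_mul_eq_cycleSum [NeZero n] {u r g : ZMod n → R}
    (h : ∀ k, u (k + 1) = r k * u k + g k) (k : ZMod n) :
    (1 - ∏ x, r x) * u (k + 1) = cycleSum r g k := by
  have hcycle := affine_recurrence_iterate h n k
  rw [ZMod.prod_range_sub_natCast, ZMod.natCast_self, sub_zero] at hcycle
  rw [cycleSum]
  linear_combination hcycle

theorem sum_mul_sum_prod_mul_eq_sum_mul_cycleSum [NeZero n] (ξ r f : ZMod n → R) :
    ∑ k, ξ k * ∑ j ∈ range n, (∏ i ∈ range j, r (k + 1 + i)) * f (k + j + 1) =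
      ∑ y, f y * cycleSum r ξ (y - 1) := by
  simp only [cycleSum, mul_sum]
  rw [sum_comm, sum_comm (s := univ)]
  refine sum_congr rfl fun j _ => ?_
  refine Fintype.sum_equiv (Equiv.addRight ((j : ZMod n) + 1)) _ _ fun k => ?_
  simp only [Equiv.coe_addRight, prod_range_add_one_add_natCast, ← add_assoc, add_sub_cancel_right]
  ring

theorem cycleSum_pos [NeZero n] [PartialOrder R] [IsStrictOrderedRing R] {r g : ZMod n → R}
    (hr : ∀ k, 0 < r k) (hg : ∀ k, 0 < g k) (k : ZMod n) : 0 < cycleSum r g k :=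
  sum_pos (fun _ _ => mul_pos (prod_pos fun _ _ => hr _) (hg _))
    (nonempty_range_iff.2 (NeZero.ne n))

end CycleSum

theorem exists_pos_eq_mul_of_mul_eq_mul {ι K : Type*} [Field K] [LinearOrder K]
    [IsStrictOrderedRing K] {a c : K} {v w : ι → K} (ha : a ≠ 0) (h : ∀ k, a * v k = c * w k)
    (hw : ∀ k, 0 < w k) {k₀ : ι} (hv : 0 < v k₀) : ∃ lam > 0, ∀ k, v k = lam * w k := by
  have hv' : ∀ k, v k = c / a * w k := fun k => by
    rw [div_mul_eq_mul_div, ← h, mul_div_cancel_left₀ _ ha]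
  exact ⟨c / a, (mul_pos_iff_of_pos_right (hw k₀)).1 (hv' k₀ ▸ hv), hv'⟩

theorem exists_forall_flux_eq {n : ℕ} [NeZero n] {R : Type*} [CommRing R] {π pt qt : ZMod n → R}
    (hsum : ∀ k, pt k + qt k = 1)
    (hstat : ∀ k, π k = π (k - 1) * pt (k - 1) + π (k + 1) * qt (k + 1)) :
    ∃ c, ∀ k, π k * pt k - π (k + 1) * qt (k + 1) = c := by
  refine ⟨_, fun k => ZMod.eq_of_forall_add_one_eq
    (g := fun k => π k * pt k - π (k + 1) * qt (k + 1)) (fun k => ?_) k 0⟩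
  have h := hstat (k + 1)
  rw [add_sub_cancel_right] at h
  linear_combination π (k + 1) * hsum (k + 1) + h

theorem exists_stationary_mass_recurrence {n : ℕ} [NeZero n] {ξ p pt qt π M r : ZMod n → ℝ}
    (hq : ∀ k, 1 - p k ≠ 0) (hD : ∀ k, p k * ξ (k - 1) + (1 - p k) * ξ k ≠ 0)
    (hpt : ∀ k, pt k = p k * ξ (k - 1) / (p k * ξ (k - 1) + (1 - p k) * ξ k))
    (hqt : ∀ k, qt k = (1 - p k) * ξ k / (p k * ξ (k - 1) + (1 - p k) * ξ k))
    (hπstat : ∀ k : ZMod n, π k = π (k - 1) * pt (k - 1) + π (k + 1) * qt (k + 1))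
    (hM : ∀ k, M k = ξ (k - 1) * ξ k / (p k * ξ (k - 1) + (1 - p k) * ξ k))
    (hr : ∀ k, r k = p k / (1 - p k)) :
    ∃ c, ∀ k, (1 - p (k + 1)) * π (k + 1) * M (k + 1) =
      r k * ((1 - p k) * π k * M k) + c * ξ k := by
  have hsum : ∀ k, pt k + qt k = 1 := fun k => by rw [hpt, hqt, ← add_div, div_self (hD k)]
  obtain ⟨c, hc⟩ := exists_forall_flux_eq hsum hπstat
  refine ⟨-c, fun k => ?_⟩
  have hflux := hc k
  rw [hpt, hqt, add_sub_cancel_right] at hflux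
  rw [hM, hM, hr, add_sub_cancel_right, ← hflux]
  field_simp [hD k, hD (k + 1), hq k]
  ring

theorem exists_pos_stationary_mass_eq_mul_cycleSum {n : ℕ} [NeZero n]
    {ξ p pt qt π M r : ZMod n → ℝ} (hξ : ∀ k, 0 < ξ k) (hp : ∀ k, 0 < p k ∧ p k < 1)
    (hprod : ∏ k ∈ range n, p k ≠ ∏ k ∈ range n, (1 - p k))
    (hpt : ∀ k, pt k = p k * ξ (k - 1) / (p k * ξ (k - 1) + (1 - p k) * ξ k))
    (hqt : ∀ k, qt k = (1 - p k) * ξ k / (p k * ξ (k - 1) + (1 - p k) * ξ k))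
    (hπsum : ∑ k ∈ range n, π k = 1)
    (hπstat : ∀ k : ZMod n, π k = π (k - 1) * pt (k - 1) + π (k + 1) * qt (k + 1))
    (hM : ∀ k, M k = ξ (k - 1) * ξ k / (p k * ξ (k - 1) + (1 - p k) * ξ k))
    (hr : ∀ k, r k = p k / (1 - p k)) :
    ∃ lam > 0, ∀ k, (1 - p (k + 1)) * π (k + 1) * M (k + 1) = lam * cycleSum r ξ k := by
  have hq : ∀ k, 0 < 1 - p k := fun k => sub_pos.2 (hp k).2
  have hD : ∀ k, 0 < p k * ξ (k - 1) + (1 - p k) * ξ k := fun k =>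
    add_pos (mul_pos (hp k).1 (hξ _)) (mul_pos (hq k) (hξ _))
  have hR : 1 - ∏ x, r x ≠ 0 := by
    rw [sub_ne_zero, ne_comm]
    simpa only [hr] using ZMod.prod_div_ne_one (fun k => (hq k).ne') hprod
  have hr_pos : ∀ k, 0 < r k := fun k => by rw [hr]; exact div_pos (hp k).1 (hq k)
  obtain ⟨c, hrec⟩ := exists_stationary_mass_recurrence (fun k => (hq k).ne')
    (fun k => (hD k).ne') hpt hqt hπstat hM hr
  have hcycle : ∀ k, (1 - ∏ x, r x) * ((1 - p (k + 1)) * π (k + 1) * M (k + 1)) =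
      c * cycleSum r ξ k := fun k =>
    (one_sub_prod_mul_eq_cycleSum (u := fun k => (1 - p k) * π k * M k)
      (g := fun k => c * ξ k) hrec k).trans (cycleSum_const_mul r ξ c k)
  obtain ⟨k₀, -, hk₀⟩ := exists_lt_of_sum_lt (s := univ) (f := fun _ => (0 : ℝ)) (g := π)
    (by rw [sum_const_zero, ← ZMod.sum_range_natCast, hπsum]; exact one_pos)
  refine exists_pos_eq_mul_of_mul_eq_mul hR hcycle (cycleSum_pos hr_pos hξ) (k₀ := k₀ - 1) ?_
  rw [sub_add_cancel, hM]
  exact mul_pos (mul_pos (hq _) hk₀) (div_pos (mul_pos (hξ _) (hξ _)) (hD _))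

theorem hitting_criterion_equivalence_general
    (n : ℕ) [NeZero n]
    (ξ p : ZMod n → ℝ)
    (hξ : ∀ k, 0 < ξ k) (hp : ∀ k, 0 < p k ∧ p k < 1)
    (hprod : (∏ k ∈ Finset.range n, p (k : ZMod n)) ≠
      ∏ k ∈ Finset.range n, (1 - p (k : ZMod n)))
    (pt qt : ZMod n → ℝ)
    (hpt : ∀ k, pt k = p k * ξ (k - 1) / (p k * ξ (k - 1) + (1 - p k) * ξ k))
    (hqt : ∀ k, qt k = (1 - p k) * ξ k / (p k * ξ (k - 1) + (1 - p k) * ξ k))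
    (π : ZMod n → ℝ)
    (hπsum : (∑ k ∈ Finset.range n, π (k : ZMod n)) = 1)
    (hπstat : ∀ k : ZMod n, π k = π (k - 1) * pt (k - 1) + π (k + 1) * qt (k + 1))
    (M r : ZMod n → ℝ)
    (hM : ∀ k, M k = ξ (k - 1) * ξ k / (p k * ξ (k - 1) + (1 - p k) * ξ k))
    (hr : ∀ k, r k = p k / (1 - p k))
    (t : ZMod n → ℝ) :
    (0 < ∑ k ∈ Finset.range n,
        (p (k : ZMod n) - (1 - p (k : ZMod n))) * π (k : ZMod n) * M (k : ZMod n) *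
          t (k : ZMod n)) ↔
    (0 < ∑ k ∈ Finset.range n, ξ (k : ZMod n) *
        ∑ j ∈ Finset.range n,
          (∏ i ∈ Finset.range j, r ((k : ZMod n) + 1 + (i : ZMod n))) *
            (r ((k : ZMod n) + (j : ZMod n) + 1) - 1) *
              t ((k : ZMod n) + (j : ZMod n) + 1)) := by
  obtain ⟨lam, hlam, hmass⟩ := exists_pos_stationary_mass_eq_mul_cycleSum hξ hp hprod hpt hqt
    hπsum hπstat hM hr
  have hterm : ∀ y, (p y - (1 - p y)) * π y * M y = (r y - 1) * (lam * cycleSum r ξ (y - 1)) :=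
    fun y => by
      rw [← hmass, sub_add_cancel, hr]
      field_simp [(sub_pos.2 (hp y).2).ne']
  have hLHS : ∑ y, (p y - (1 - p y)) * π y * M y * t y =
      lam * ∑ y, (r y - 1) * t y * cycleSum r ξ (y - 1) := by
    rw [mul_sum]
    exact sum_congr rfl fun y _ => by rw [hterm]; ring
  have hRHS := sum_mul_sum_prod_mul_eq_sum_mul_cycleSum ξ r fun y => (r y - 1) * t y
  simp only [← mul_assoc] at hRHS
  rw [← ZMod.sum_range_natCast] at hLHS hRHS
  rw [hLHS, hRHS, mul_pos_iff_of_pos_left hlam]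

/-- Remark 3 of the paper: when `0 < p_k < 1` and `p₁⋯pₙ ≠ q₁⋯qₙ`, the sign criterion
`Σ_k (p_k − q_k) π_k M_k t_k > 0` (with `π` the stationary distribution and
`M_k = ξ_{k−1}ξ_k/(p_kξ_{k−1}+q_kξ_k)`) is equivalent to
`Σ_k ξ_k Σ_j r_{k+1}⋯r_{k+j−1}(r_{k+j}−1) t_{k+j} > 0`, where `r_k = p_k/q_k`. -/
theorem hitting_criterion_equivalence
    (n : ℕ) [NeZero n] (hn : 2 ≤ n)
    (ξ p : ZMod n → ℝ)
    (hξ : ∀ k, 0 < ξ k) (hp : ∀ k, 0 < p k ∧ p k < 1)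
    (hprod : (∏ k ∈ Finset.range n, p (k : ZMod n)) ≠
      ∏ k ∈ Finset.range n, (1 - p (k : ZMod n)))
    (pt qt : ZMod n → ℝ)
    (hpt : ∀ k, pt k = p k * ξ (k - 1) / (p k * ξ (k - 1) + (1 - p k) * ξ k))
    (hqt : ∀ k, qt k = (1 - p k) * ξ k / (p k * ξ (k - 1) + (1 - p k) * ξ k))
    (π : ZMod n → ℝ)
    (hπ0 : ∀ k, 0 ≤ π k) (hπsum : (∑ k ∈ Finset.range n, π (k : ZMod n)) = 1)
    (hπstat : ∀ k : ZMod n, π k = π (k - 1) * pt (k - 1) + π (k + 1) * qt (k + 1))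
    (M r : ZMod n → ℝ)
    (hM : ∀ k, M k = ξ (k - 1) * ξ k / (p k * ξ (k - 1) + (1 - p k) * ξ k))
    (hr : ∀ k, r k = p k / (1 - p k))
    (t : ZMod n → ℝ) :
    (0 < ∑ k ∈ Finset.range n,
        (p (k : ZMod n) - (1 - p (k : ZMod n))) * π (k : ZMod n) * M (k : ZMod n) *
          t (k : ZMod n)) ↔
    (0 < ∑ k ∈ Finset.range n, ξ (k : ZMod n) *
        ∑ j ∈ Finset.range n,
          (∏ i ∈ Finset.range j, r ((k : ZMod n) + 1 + (i : ZMod n))) *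
            (r ((k : ZMod n) + (j : ZMod n) + 1) - 1) *
              t ((k : ZMod n) + (j : ZMod n) + 1)) :=
  hitting_criterion_equivalence_general n ξ p hξ hp hprod pt qt hpt hqt π hπsum hπstat M r hM hr t
end

section
/- Consider the cyclic-chain setup with n = 2, ξ₁ = ξ ∈ (0, 2π) and ξ₂ = 2π − ξ, and p₁, p₂ ∈ [0,1]. Then: (a) π = (1/2, 1/2) is a stationary distribution of the cyclic chain; and (b) with M_k = ξ_{k−1} ξ_k/(p_k ξ_{k−1} + q_k ξ_k) and arbitrary real numbers t₁, t₂, one has (p₁ − q₁) π₁ M₁ t₁ + (p₂ − q₂) π₂ M₂ t₂ > 0 if and only if (p₁ − q₁)(p₂ − q₂) ξ (t₁ − t₂) + 2π ((p₁ − q₁) q₂ t₁ + (p₂ − q₂) p₁ t₂) > 0. -/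
/-!
With two states the cyclic chain has `k - 1 = k + 1`, so the stationarity equation at `k` reads
`π k = π (k + 1) * (p̃ (k + 1) + q̃ (k + 1)) = π (k + 1)` and the uniform distribution is stationary.
For the hitting criterion, with `D₁ = p₁ (2π − ξ) + q₁ ξ` and `D₂ = p₂ ξ + q₂ (2π − ξ)` the weighted sum
equals `ξ (2π − ξ) / (2 D₁ D₂)` times `(p₁ − q₁) t₁ D₂ + (p₂ − q₂) t₂ D₁`, which expands to the
right-hand side of the criterion; the prefactor is positive, so the two signs agree.
-/

lemma mul_add_one_sub_mul_pos {p a b : ℝ} (hp₀ : 0 ≤ p) (hp₁ : p ≤ 1) (ha : 0 < a) (hb : 0 < b) :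
    0 < p * a + (1 - p) * b :=
  convex_Ioi (0 : ℝ) ha hb hp₀ (sub_nonneg.2 hp₁) (add_sub_cancel p 1)

lemma ZMod.two_sub_one_eq_add_one (k : ZMod 2) : k - 1 = k + 1 := by
  rw [sub_eq_add_neg, ZMod.neg_eq_self_mod_two]

lemma stationary_of_two_states {π pt qt : ZMod 2 → ℝ} (hπ : ∀ k, π k = π (k + 1))
    (hrow : ∀ k, pt k + qt k = 1) (k : ZMod 2) :
    π k = π (k - 1) * pt (k - 1) + π (k + 1) * qt (k + 1) := by
  rw [ZMod.two_sub_one_eq_add_one, ← mul_add, hrow, mul_one, hπ]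

lemma two_wedge_hitting_criterion {a c p₁ p₂ t₁ t₂ : ℝ} (ha : 0 < a) (hac : a < c)
    (hp₁ : 0 ≤ p₁ ∧ p₁ ≤ 1) (hp₂ : 0 ≤ p₂ ∧ p₂ ≤ 1) :
    (0 < (p₁ - (1 - p₁)) * (1 / 2) * ((c - a) * a / (p₁ * (c - a) + (1 - p₁) * a)) * t₁ +
        (p₂ - (1 - p₂)) * (1 / 2) * (a * (c - a) / (p₂ * a + (1 - p₂) * (c - a))) * t₂) ↔
      0 < (p₁ - (1 - p₁)) * (p₂ - (1 - p₂)) * a * (t₁ - t₂) +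
        c * ((p₁ - (1 - p₁)) * (1 - p₂) * t₁ + (p₂ - (1 - p₂)) * p₁ * t₂) := by
  have hb : 0 < c - a := sub_pos.2 hac
  have hD₁ := mul_add_one_sub_mul_pos hp₁.1 hp₁.2 hb ha
  have hD₂ := mul_add_one_sub_mul_pos hp₂.1 hp₂.2 ha hb
  have hfactor : 0 < a * (c - a) / (2 * (p₁ * (c - a) + (1 - p₁) * a) *
      (p₂ * a + (1 - p₂) * (c - a))) := by positivity
  have hnum : (p₁ - (1 - p₁)) * (p₂ - (1 - p₂)) * a * (t₁ - t₂) +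
        c * ((p₁ - (1 - p₁)) * (1 - p₂) * t₁ + (p₂ - (1 - p₂)) * p₁ * t₂) =
      (p₁ - (1 - p₁)) * t₁ * (p₂ * a + (1 - p₂) * (c - a)) +
        (p₂ - (1 - p₂)) * t₂ * (p₁ * (c - a) + (1 - p₁) * a) := by ring
  refine Iff.trans ?_ (mul_pos_iff_of_pos_left hfactor)
  rw [hnum]
  apply iff_of_eq
  congr 1
  generalize p₁ * (c - a) + (1 - p₁) * a = D₁ at *
  generalize p₂ * a + (1 - p₂) * (c - a) = D₂ at *
  field_simp

/-- States are indexed by `ZMod 2`, the paper's index `1` corresponding to the residue `1`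
and the index `2` to the residue `0`. -/
theorem two_membranes_example
    (ξv : ℝ) (hξv : 0 < ξv ∧ ξv < 2 * Real.pi)
    (p₁ p₂ : ℝ) (hp₁ : 0 ≤ p₁ ∧ p₁ ≤ 1) (hp₂ : 0 ≤ p₂ ∧ p₂ ≤ 1)
    (ξ p : ZMod 2 → ℝ)
    (hξ1 : ξ 1 = ξv) (hξ2 : ξ 0 = 2 * Real.pi - ξv)
    (hpv1 : p 1 = p₁) (hpv2 : p 0 = p₂)
    (pt qt : ZMod 2 → ℝ)
    (hpt : ∀ k, pt k = p k * ξ (k - 1) / (p k * ξ (k - 1) + (1 - p k) * ξ k))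
    (hqt : ∀ k, qt k = (1 - p k) * ξ k / (p k * ξ (k - 1) + (1 - p k) * ξ k))
    (π : ZMod 2 → ℝ) (hπ : ∀ k, π k = 1 / 2)
    (M : ZMod 2 → ℝ)
    (hM : ∀ k, M k = ξ (k - 1) * ξ k / (p k * ξ (k - 1) + (1 - p k) * ξ k))
    (t₁ t₂ : ℝ) :
    ((∀ k, 0 ≤ π k) ∧ π 0 + π 1 = 1 ∧
      (∀ k : ZMod 2, π k = π (k - 1) * pt (k - 1) + π (k + 1) * qt (k + 1))) ∧
    ((0 < (p 1 - (1 - p 1)) * π 1 * M 1 * t₁ + (p 0 - (1 - p 0)) * π 0 * M 0 * t₂) ↔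
      0 < (p₁ - (1 - p₁)) * (p₂ - (1 - p₂)) * ξv * (t₁ - t₂) +
        2 * Real.pi * ((p₁ - (1 - p₁)) * (1 - p₂) * t₁ + (p₂ - (1 - p₂)) * p₁ * t₂)) := by
  have hξ : ∀ k, 0 < ξ k := by
    intro k
    fin_cases k
    · exact (show 0 < ξ 0 by linarith)
    · exact (show 0 < ξ 1 by linarith)
  have hp : ∀ k, 0 ≤ p k ∧ p k ≤ 1 := by
    intro k
    fin_cases k
    · exact (show 0 ≤ p 0 ∧ p 0 ≤ 1 by rwa [hpv2])
    · exact (show 0 ≤ p 1 ∧ p 1 ≤ 1 by rwa [hpv1])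
  have hrow : ∀ k, pt k + qt k = 1 := fun k => by
    rw [hpt, hqt, ← add_div, div_self
      (mul_add_one_sub_mul_pos (hp k).1 (hp k).2 (hξ (k - 1)) (hξ k)).ne']
  refine ⟨⟨fun k => by norm_num [hπ], by norm_num [hπ],
    stationary_of_two_states (fun k => by rw [hπ, hπ]) hrow⟩, ?_⟩
  rw [hM, hM, hπ, hπ, sub_self, zero_sub, ZMod.neg_eq_self_mod_two, hξ1, hξ2, hpv1, hpv2]
  exact two_wedge_hitting_criterion hξv.1 hξv.2 hp₁ hp₂
end
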